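/- arXiv:0708.2659 — 2 statements merged into one kernel-verified Lean document; each statement's English description precedes it below -/
import Mathlib

section
/- Let T be a positive face structure and a a face of T of dimension ≥ 1. Then the following are equivalent: (a) γ(a) is unary (|δ(γ(a))| = 1); (b) every face of δ(a) is unary; (c) there is v ∈ δ(γ(a)) and an upper path through unary faces of δ(a) from v to γγ(a). Moreover, the cardinality identity |δ(γ(a))| = 1 + Σ_{x ∈ δ(a)} (|δ(x)| − 1) holds. -/
/-!  Positive face structures, following M. Zawadowski.  `F k` is the set of
faces of dimension `k`; every face of positive dimension has a codomain face
one dimension lower and a nonempty set of domain faces one dimension lower. -/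

structure PrePFS where
  F : ℕ → Type
  γ : ∀ {k : ℕ}, F (k + 1) → F k
  δ : ∀ {k : ℕ}, F (k + 1) → Set (F k)

namespace PrePFS

variable (S : PrePFS)

/-- The strict upper order `<⁺`. -/
def ltP {k : ℕ} : S.F k → S.F k → Prop :=
  Relation.TransGen (fun x y => ∃ α : S.F (k + 1), x ∈ S.δ α ∧ S.γ α = y)

/-- The lower order `<⁻`. -/
def ltM {k : ℕ} : S.F (k + 1) → S.F (k + 1) → Prop :=
  Relation.TransGen (fun a b => S.γ a ∈ S.δ b)

/-- A face is unary if its domain is a singleton. -/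
def isUnary {k : ℕ} (a : S.F (k + 1)) : Prop := ∃ x, S.δ a = {x}

end PrePFS

/-- The axioms of a positive face structure. -/
structure IsPFS (S : PrePFS) : Prop where
  fin : ∀ k, Finite (S.F k)
  bdd : ∃ n, ∀ k, n < k → IsEmpty (S.F k)
  nonempty₀ : Nonempty (S.F 0)
  dom_nonempty : ∀ {k : ℕ} (a : S.F (k + 1)), (S.δ a).Nonempty
  glob_γ : ∀ {k : ℕ} (a : S.F (k + 2)),
    ({S.γ (S.γ a)} : Set (S.F k)) =
      {y | ∃ x ∈ S.δ a, S.γ x = y} \ (⋃ x ∈ S.δ a, S.δ x)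
  glob_δ : ∀ {k : ℕ} (a : S.F (k + 2)),
    S.δ (S.γ a) = (⋃ x ∈ S.δ a, S.δ x) \ {y | ∃ x ∈ S.δ a, S.γ x = y}
  strictP : ∀ {k : ℕ} (x : S.F k), ¬ S.ltP x x
  linearP₀ : ∀ x y : S.F 0, x = y ∨ S.ltP x y ∨ S.ltP y x
  disj : ∀ {k : ℕ} (a b : S.F (k + 1)),
    (S.ltM a b ∨ S.ltM b a) → ¬ (S.ltP a b ∨ S.ltP b a)
  pencil_γ : ∀ {k : ℕ} (a b : S.F (k + 1)),
    S.γ a = S.γ b → a = b ∨ S.ltP a b ∨ S.ltP b a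
  pencil_δ : ∀ {k : ℕ} (x : S.F k) (a b : S.F (k + 1)),
    x ∈ S.δ a → x ∈ S.δ b → a = b ∨ S.ltP a b ∨ S.ltP b a

/-! The faces of `δ(a)` are pairwise `<⁺`-incomparable: `x <⁺ y` with `y ∈ δ(a)` yields a face
`α <⁻ a` with `x ∈ δ(α)`, and the pencil of `x` then relates `α` and `a` by `<⁺` as well.
So `γ` is injective on `δ(a)` and their domains are pairwise disjoint. By globularity,
`δγ(a) = ⋃ δ(x) \ γ(δ(a))` and `{γγ(a)} = γ(δ(a)) \ ⋃ δ(x)`, so counting gives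
`|δγ(a)| = Σ |δ(x)| - (|δ(a)| - 1)`; hence `γ(a)` is unary iff all faces of `δ(a)` are.
Following codomains upward, every face of `δ(a)` starts a lower path inside `δ(a)` ending at the
face with codomain `γγ(a)`; conversely, along a path of unary faces starting at
`v ∈ δγ(a)` no other face of `δ(a)` can enter, so such a path exhausts `δ(a)`. -/

namespace PrePFS

variable {S : PrePFS} {k : ℕ}

lemma ltP_γ_of_ltM {a b : S.F (k + 1)} (h : S.ltM a b) : S.ltP (S.γ a) (S.γ b) := by
  induction h with
  | single h => exact .single ⟨_, h, rfl⟩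
  | tail _ h ih => exact ih.tail ⟨_, h, rfl⟩

lemma exists_ltM_of_ltP_of_mem_δ {x y : S.F k} (h : S.ltP x y) {a : S.F (k + 1)}
    (hy : y ∈ S.δ a) : ∃ α, x ∈ S.δ α ∧ S.ltM α a := by
  induction h generalizing a with
  | single h =>
    obtain ⟨α, hxα, rfl⟩ := h
    exact ⟨α, hxα, .single hy⟩
  | tail _ h ih =>
    obtain ⟨β, hbβ, rfl⟩ := h
    obtain ⟨α, hxα, hαβ⟩ := ih hbβ
    exact ⟨α, hxα, hαβ.tail hy⟩

lemma isUnary.eq_of_mem {a : S.F (k + 1)} (ha : S.isUnary a) {u w : S.F k} (hu : u ∈ S.δ a)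
    (hw : w ∈ S.δ a) : u = w := by
  obtain ⟨z, hz⟩ := ha
  rw [hz] at hu hw
  exact hu.trans hw.symm

end PrePFS

lemma finsum_mem_eq_zero_iff {α M : Type*} [AddCommMonoid M] [PartialOrder M]
    [CanonicallyOrderedAdd M] {s : Set α} (hs : s.Finite) {f : α → M} :
    ∑ᶠ x ∈ s, f x = 0 ↔ ∀ x ∈ s, f x = 0 := by
  simp [finsum_mem_eq_finite_toFinset_sum _ hs, Finset.sum_eq_zero_iff]

namespace IsPFS

open PrePFS

variable {S : PrePFS} {k : ℕ}

lemma ltM_irrefl (hS : IsPFS S) (a : S.F (k + 1)) : ¬ S.ltM a a :=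
  fun h => hS.strictP _ (ltP_γ_of_ltM h)

lemma not_ltP_of_mem_δ (hS : IsPFS S) {a : S.F (k + 2)} {x y : S.F (k + 1)}
    (hx : x ∈ S.δ a) (hy : y ∈ S.δ a) : ¬ S.ltP x y := by
  intro hxy
  obtain ⟨α, hxα, hαa⟩ := exists_ltM_of_ltP_of_mem_δ hxy hy
  rcases hS.pencil_δ x a α hx hxα with rfl | hcomp
  · exact hS.ltM_irrefl a hαa
  · exact hS.disj α a (.inl hαa) hcomp.symm

lemma injOn_γ_δ (hS : IsPFS S) (a : S.F (k + 2)) : Set.InjOn S.γ (S.δ a) := by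
  intro x hx y hy h
  rcases hS.pencil_γ x y h with rfl | h | h
  · rfl
  · exact absurd h (hS.not_ltP_of_mem_δ hx hy)
  · exact absurd h (hS.not_ltP_of_mem_δ hy hx)

lemma pairwiseDisjoint_δ (hS : IsPFS S) (a : S.F (k + 2)) : (S.δ a).PairwiseDisjoint S.δ := by
  intro x hx y hy hne
  refine Set.disjoint_left.2 fun u hux huy => ?_
  rcases hS.pencil_δ u x y hux huy with rfl | h | h
  · exact hne rfl
  · exact hS.not_ltP_of_mem_δ hx hy h
  · exact hS.not_ltP_of_mem_δ hy hx h

lemma δ_γ_eq (hS : IsPFS S) (a : S.F (k + 2)) :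
    S.δ (S.γ a) = (⋃ x ∈ S.δ a, S.δ x) \ S.γ '' S.δ a :=
  hS.glob_δ a

lemma image_γ_diff_eq (hS : IsPFS S) (a : S.F (k + 2)) :
    S.γ '' S.δ a \ (⋃ x ∈ S.δ a, S.δ x) = {S.γ (S.γ a)} :=
  (hS.glob_γ a).symm

lemma exists_γ_mem_δ_of_ne (hS : IsPFS S) {a : S.F (k + 2)} {x : S.F (k + 1)}
    (hx : x ∈ S.δ a) (hne : S.γ x ≠ S.γ (S.γ a)) : ∃ y ∈ S.δ a, S.γ x ∈ S.δ y := by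
  by_contra! h
  refine hne (Set.eq_of_mem_singleton ?_)
  rw [← hS.image_γ_diff_eq a]
  exact ⟨⟨x, hx, rfl⟩, by simpa using h⟩

lemma wellFounded_flip_ltP (hS : IsPFS S) (k : ℕ) : WellFounded (flip (S.ltP (k := k))) :=
  have := hS.fin k
  haveI : IsTrans _ (flip (S.ltP (k := k))) := ⟨fun _ _ _ h₁ h₂ => h₂.trans h₁⟩
  haveI : Std.Irrefl (flip (S.ltP (k := k))) := ⟨hS.strictP⟩
  Finite.wellFounded_of_trans_of_irrefl _

lemma δ_induction (hS : IsPFS S) (a : S.F (k + 2)) {P : S.F (k + 1) → Prop}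
    (top : ∀ x ∈ S.δ a, S.γ x = S.γ (S.γ a) → P x)
    (step : ∀ x ∈ S.δ a, ∀ y ∈ S.δ a, S.γ x ∈ S.δ y → P y → P x) :
    ∀ x ∈ S.δ a, P x := by
  intro x
  induction x using ((hS.wellFounded_flip_ltP k).onFun (f := S.γ)).induction with
  | _ x ih =>
    intro hx
    by_cases htop : S.γ x = S.γ (S.γ a)
    · exact top x hx htop
    · obtain ⟨y, hy, hxy⟩ := hS.exists_γ_mem_δ_of_ne hx htop
      exact step x hx y hy hxy (ih y (.single ⟨y, hxy, rfl⟩) hy)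

lemma exists_lowerPath_to_top (hS : IsPFS S) (a : S.F (k + 2)) :
    ∀ x ∈ S.δ a, ∃ m, ∃ p : Fin (m + 1) → S.F (k + 1),
      p 0 = x ∧ (∀ i, p i ∈ S.δ a) ∧ S.γ (p (Fin.last m)) = S.γ (S.γ a) ∧
      ∀ i : Fin m, S.γ (p i.castSucc) ∈ S.δ (p i.succ) := by
  refine hS.δ_induction a
    (fun x hx htop => ⟨0, fun _ => x, rfl, fun _ => hx, htop, fun i => i.elim0⟩) ?_
  rintro x hx y - hxy ⟨m, p, rfl, hpδ, hlast, hstep⟩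
  refine ⟨m + 1, Fin.cons x p, rfl, Fin.cases hx hpδ, ?_, Fin.cases hxy hstep⟩
  rwa [← Fin.succ_last, Fin.cons_succ]

lemma mem_range_of_unary_path (hS : IsPFS S) (a : S.F (k + 2)) {v : S.F k}
    (hv : v ∈ S.δ (S.γ a)) {m : ℕ} {p : Fin (m + 1) → S.F (k + 1)}
    (hp : ∀ i, p i ∈ S.δ a ∧ S.isUnary (p i)) (hv0 : v ∈ S.δ (p 0))
    (hlast : S.γ (p (Fin.last m)) = S.γ (S.γ a))
    (hstep : ∀ i : Fin m, S.γ (p i.castSucc) ∈ S.δ (p i.succ)) :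
    ∀ x ∈ S.δ a, x ∈ Set.range p := by
  refine hS.δ_induction a
    (fun x hx htop => ⟨Fin.last m, hS.injOn_γ_δ a (hp _).1 hx (hlast.trans htop.symm)⟩) ?_
  rintro x hx _ - hxy ⟨j, rfl⟩
  cases j using Fin.cases with
  | zero =>
    -- `δ(p 0) = {v}` would make `v` a codomain of a face of `δ(a)`
    have hxv : S.γ x = v := (hp 0).2.eq_of_mem hxy hv0
    rw [hS.δ_γ_eq] at hv
    exact absurd ⟨x, hx, hxv⟩ hv.2
  | succ i =>
    have : S.γ (p i.castSucc) = S.γ x := (hp i.succ).2.eq_of_mem (hstep i) hxy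
    exact ⟨i.castSucc, hS.injOn_γ_δ a (hp _).1 hx this⟩

theorem ncard_δ_γ (hS : IsPFS S) (a : S.F (k + 2)) :
    (S.δ (S.γ a)).ncard = 1 + ∑ᶠ x ∈ S.δ a, ((S.δ x).ncard - 1) := by
  have := hS.fin k
  have := hS.fin (k + 1)
  rw [hS.δ_γ_eq]
  set U := ⋃ x ∈ S.δ a, S.δ x
  have hU : U.ncard = ∑ᶠ x ∈ S.δ a, (S.δ x).ncard :=
    (Set.toFinite _).ncard_biUnion (fun _ _ => Set.toFinite _) (hS.pairwiseDisjoint_δ a)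
  have hG : (S.γ '' S.δ a).ncard = (S.δ a).ncard := (hS.injOn_γ_δ a).ncard_image
  have hsplitU := Set.ncard_inter_add_ncard_sdiff_eq_ncard U (S.γ '' S.δ a)
  have hsplitG := Set.ncard_inter_add_ncard_sdiff_eq_ncard (S.γ '' S.δ a) U
  rw [hS.image_γ_diff_eq, Set.ncard_singleton, Set.inter_comm] at hsplitG
  have hsum : ∑ᶠ x ∈ S.δ a, (S.δ x).ncard =
      ∑ᶠ x ∈ S.δ a, ((S.δ x).ncard - 1) + (S.δ a).ncard := by
    rw [← finsum_one, ← finsum_mem_add_distrib (Set.toFinite _)]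
    refine finsum_mem_congr rfl fun x _ => ?_
    have := (Set.ncard_pos (Set.toFinite _)).2 (hS.dom_nonempty x)
    omega
  omega

lemma isUnary_iff_ncard_sub_one_eq_zero (hS : IsPFS S) (x : S.F (k + 1)) :
    S.isUnary x ↔ (S.δ x).ncard - 1 = 0 := by
  have := hS.fin k
  have := (Set.ncard_pos (Set.toFinite _)).2 (hS.dom_nonempty x)
  rw [isUnary, ← Set.ncard_eq_one]
  omega

theorem isUnary_γ_iff (hS : IsPFS S) (a : S.F (k + 2)) :
    S.isUnary (S.γ a) ↔ ∀ x ∈ S.δ a, S.isUnary x := by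
  have := hS.fin (k + 1)
  calc S.isUnary (S.γ a) ↔ (S.δ (S.γ a)).ncard = 1 := Set.ncard_eq_one.symm
    _ ↔ ∑ᶠ x ∈ S.δ a, ((S.δ x).ncard - 1) = 0 := by rw [hS.ncard_δ_γ]; omega
    _ ↔ ∀ x ∈ S.δ a, (S.δ x).ncard - 1 = 0 := finsum_mem_eq_zero_iff (Set.toFinite _)
    _ ↔ ∀ x ∈ S.δ a, S.isUnary x :=
      forall₂_congr fun x _ => (hS.isUnary_iff_ncard_sub_one_eq_zero x).symm

theorem forall_isUnary_iff_exists_unary_path (hS : IsPFS S) (a : S.F (k + 2)) :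
    (∀ x ∈ S.δ a, S.isUnary x) ↔
      ∃ v ∈ S.δ (S.γ a), ∃ m : ℕ, ∃ p : Fin (m + 1) → S.F (k + 1),
        (∀ i, p i ∈ S.δ a ∧ S.isUnary (p i)) ∧
        v ∈ S.δ (p 0) ∧ S.γ (p (Fin.last m)) = S.γ (S.γ a) ∧
        ∀ i : Fin m, S.γ (p i.castSucc) ∈ S.δ (p i.succ) := by
  constructor
  · intro hunary
    obtain ⟨v, hv⟩ := hS.dom_nonempty (S.γ a)
    obtain ⟨x, hx, hvx⟩ := Set.mem_iUnion₂.1 (hS.δ_γ_eq a ▸ hv).1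
    obtain ⟨m, p, rfl, hpδ, hlast, hstep⟩ := hS.exists_lowerPath_to_top a x hx
    exact ⟨v, hv, m, p, fun i => ⟨hpδ i, hunary _ (hpδ i)⟩, hvx, hlast, hstep⟩
  · rintro ⟨v, hv, m, p, hp, hv0, hlast, hstep⟩ x hx
    obtain ⟨i, rfl⟩ := hS.mem_range_of_unary_path a hv hp hv0 hlast hstep x hx
    exact (hp i).2

end IsPFS

/-- in a positive face structure, `γ(a)` is unary iff every face
of `δ(a)` is unary iff there are `v ∈ δγ(a)` and an upper path through unary
faces of `δ(a)` from `v` to `γγ(a)`; moreover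
`|δγ(a)| = 1 + Σ_{x ∈ δ(a)} (|δ(x)| − 1)`. -/
theorem stmt17 (S : PrePFS) (hS : IsPFS S) {k : ℕ} (a : S.F (k + 2)) :
    (((∃ y, S.δ (S.γ a) = {y}) ↔ ∀ x ∈ S.δ a, ∃ y, S.δ x = {y}) ∧
      ((∀ x ∈ S.δ a, ∃ y, S.δ x = {y}) ↔
        ∃ v ∈ S.δ (S.γ a), ∃ m : ℕ, ∃ p : Fin (m + 1) → S.F (k + 1),
          (∀ i, p i ∈ S.δ a ∧ ∃ y, S.δ (p i) = {y}) ∧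
          v ∈ S.δ (p 0) ∧ S.γ (p (Fin.last m)) = S.γ (S.γ a) ∧
          ∀ i : Fin m, S.γ (p i.castSucc) ∈ S.δ (p i.succ))) ∧
    (S.δ (S.γ a)).ncard = 1 + ∑ᶠ x ∈ S.δ a, ((S.δ x).ncard - 1) :=
  ⟨⟨hS.isUnary_γ_iff a, hS.forall_isUnary_iff_exists_unary_path a⟩, hS.ncard_δ_γ a⟩
end

section
/- Let T be a positive face structure and 𝒥 ⊆ T^u an ideal (a set of unary faces with 𝒥 ∩ γ(T) = ∅ and 𝒥 ∩ δ(𝒥) = ∅). Then for faces x, y ∈ T − 𝒥, the equivalence classes [x] and [y] under ∼_𝒥 are equal iff x = y or there is an upper 𝒥-path from x to y or from y to x. -/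
/-- The least equivalence relation containing `r`. -/
inductive EqvClosure {α : Type} (r : α → α → Prop) : α → α → Prop
  | rel : ∀ x y, r x y → EqvClosure r x y
  | refl : ∀ x, EqvClosure r x x
  | symm : ∀ x y, EqvClosure r x y → EqvClosure r y x
  | trans : ∀ x y z, EqvClosure r x y → EqvClosure r y z → EqvClosure r x z

/-- An ideal in a positive face structure: a set of unary faces which are
neither codomains of faces nor members of domains of ideal faces. -/
structure IsIdeal (S : PrePFS) (J : ∀ k, Set (S.F k)) : Prop where
  j₀ : J 0 = ∅
  unary : ∀ {k : ℕ} (a : S.F (k + 1)), a ∈ J (k + 1) → ∃ x, S.δ a = {x}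
  not_cod : ∀ {k : ℕ} (x : S.F k), x ∈ J k → ¬ ∃ α : S.F (k + 1), S.γ α = x
  not_dom : ∀ {k : ℕ} (x : S.F k), x ∈ J k →
    ¬ ∃ α : S.F (k + 1), α ∈ J (k + 1) ∧ x ∈ S.δ α

/-- The generating relation of `∼_𝒥` : `x ∼' y` iff there is `a ∈ 𝒥` with
`δ(a) = {x}` and `γ(a) = y`. -/
def relJ (S : PrePFS) (J : ∀ k, Set (S.F k)) (k : ℕ) (x y : S.F k) : Prop :=
  ∃ a : S.F (k + 1), a ∈ J (k + 1) ∧ S.δ a = {x} ∧ S.γ a = y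

/-- The equivalence relation `∼_𝒥`. -/
def simJ (S : PrePFS) (J : ∀ k, Set (S.F k)) (k : ℕ) : S.F k → S.F k → Prop :=
  EqvClosure (relJ S J k)

/-- An upper `𝒥`-path from `x` to `y`. -/
def pathJ (S : PrePFS) (J : ∀ k, Set (S.F k)) (k : ℕ) (x y : S.F k) : Prop :=
  ∃ m : ℕ, ∃ p : Fin (m + 1) → S.F (k + 1),
    (∀ i, p i ∈ J (k + 1)) ∧ x ∈ S.δ (p 0) ∧ S.γ (p (Fin.last m)) = y ∧
    ∀ i : Fin m, S.γ (p i.castSucc) ∈ S.δ (p i.succ)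


/-!
Faces of an ideal are unary and are not codomains, so by the pencil axioms an ideal face is
determined by its codomain and by any face of its domain. Hence the generating relation `x ∼' y`
is both functional and injective. For such a relation any two elements reachable from a common
element (or reaching a common element) are comparable by reachability, so the equivalence
closure is just reachability in one direction or the other; and reachability in `≥ 1` steps
is exactly an upper `𝒥`-path.
-/

open Relation

section EqvClosure

variable {α : Type} {r : α → α → Prop}

lemma EqvClosure.of_reflTransGen {x y : α} (h : ReflTransGen r x y) : EqvClosure r x y := by
  induction h with
  | refl => exact .refl x
  | tail _ hyz ih => exact .trans _ _ _ ih (.rel _ _ hyz)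

lemma Relation.ReflTransGen.total_of_left_unique (hl : Relator.LeftUnique r) {x y z : α}
    (hxz : ReflTransGen r x z) (hyz : ReflTransGen r y z) :
    ReflTransGen r x y ∨ ReflTransGen r y x := by
  have hr : Relator.RightUnique (Function.swap r) := fun _ _ _ h₁ h₂ => hl h₁ h₂
  simpa only [reflTransGen_swap, or_comm] using
    ReflTransGen.total_of_right_unique hr (reflTransGen_swap.2 hxz) (reflTransGen_swap.2 hyz)

lemma eqvClosure_iff_reflTransGen_or (hr : Relator.RightUnique r) (hl : Relator.LeftUnique r)
    {x y : α} : EqvClosure r x y ↔ ReflTransGen r x y ∨ ReflTransGen r y x := by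
  refine ⟨fun h => ?_, ?_⟩
  · induction h with
    | rel x y h => exact .inl (.single h)
    | refl x => exact .inl .refl
    | symm x y _ ih => exact ih.symm
    | trans x y z _ _ ihxy ihyz =>
      rcases ihxy with hxy | hyx <;> rcases ihyz with hyz | hzy
      · exact .inl (hxy.trans hyz)
      · exact ReflTransGen.total_of_left_unique hl hxy hzy
      · exact ReflTransGen.total_of_right_unique hr hyx hyz
      · exact .inr (hzy.trans hyx)
  · rintro (h | h)
    · exact .of_reflTransGen h
    · exact .symm _ _ (.of_reflTransGen h)

end EqvClosure

lemma PrePFS.exists_γ_eq_of_ltP (S : PrePFS) {k : ℕ} {x y : S.F k} (h : S.ltP x y) :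
    ∃ a : S.F (k + 1), S.γ a = y := by
  cases h with
  | single h => obtain ⟨a, -, ha⟩ := h; exact ⟨a, ha⟩
  | tail _ h => obtain ⟨a, -, ha⟩ := h; exact ⟨a, ha⟩

namespace IsIdeal

variable {S : PrePFS} {J : ∀ k, Set (S.F k)}

lemma eq_of_comparable (hJ : IsIdeal S J) {k : ℕ} {a b : S.F k} (ha : a ∈ J k) (hb : b ∈ J k)
    (h : a = b ∨ S.ltP a b ∨ S.ltP b a) : a = b := by
  rcases h with h | h | h
  · exact h
  · exact absurd (S.exists_γ_eq_of_ltP h) (hJ.not_cod b hb)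
  · exact absurd (S.exists_γ_eq_of_ltP h) (hJ.not_cod a ha)

lemma mem_δ_iff (hJ : IsIdeal S J) {k : ℕ} {a : S.F (k + 1)} (ha : a ∈ J (k + 1))
    {x : S.F k} : x ∈ S.δ a ↔ S.δ a = {x} := by
  obtain ⟨z, hz⟩ := hJ.unary a ha
  simp [hz, eq_comm]

lemma relJ_iff (hJ : IsIdeal S J) {k : ℕ} {x y : S.F k} :
    relJ S J k x y ↔ ∃ a ∈ J (k + 1), x ∈ S.δ a ∧ S.γ a = y := by
  refine exists_congr fun a => ⟨fun ⟨ha, hδ, hγ⟩ => ⟨ha, ?_, hγ⟩, fun ⟨ha, hx, hγ⟩ => ⟨ha, ?_, hγ⟩⟩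
  · exact (hJ.mem_δ_iff ha).2 hδ
  · exact (hJ.mem_δ_iff ha).1 hx

lemma relJ_rightUnique (hS : IsPFS S) (hJ : IsIdeal S J) {k : ℕ} :
    Relator.RightUnique (relJ S J k) := by
  intro x y z hxy hxz
  obtain ⟨a, ha, hxa, rfl⟩ := hJ.relJ_iff.1 hxy
  obtain ⟨b, hb, hxb, rfl⟩ := hJ.relJ_iff.1 hxz
  rw [hJ.eq_of_comparable ha hb (hS.pencil_δ x a b hxa hxb)]

lemma relJ_leftUnique (hS : IsPFS S) (hJ : IsIdeal S J) {k : ℕ} :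
    Relator.LeftUnique (relJ S J k) := by
  rintro x y z ⟨a, ha, hxa, rfl⟩ ⟨b, hb, hyb, hγ⟩
  rw [hJ.eq_of_comparable ha hb (hS.pencil_γ a b hγ.symm), hyb] at hxa
  exact Set.singleton_injective hxa.symm

lemma pathJ_iff_transGen (hJ : IsIdeal S J) {k : ℕ} {x y : S.F k} :
    pathJ S J k x y ↔ TransGen (relJ S J k) x y := by
  constructor
  · rintro ⟨m, p, hp, hx, rfl, hchain⟩
    have hreach : ∀ i, TransGen (relJ S J k) x (S.γ (p i)) := by
      intro i
      induction i using Fin.induction with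
      | zero => exact .single (hJ.relJ_iff.2 ⟨p 0, hp 0, hx, rfl⟩)
      | succ i ih => exact ih.tail (hJ.relJ_iff.2 ⟨p i.succ, hp _, hchain i, rfl⟩)
    exact hreach _
  · intro h
    induction h with
    | single h =>
      obtain ⟨a, ha, hxa, hγ⟩ := hJ.relJ_iff.1 h
      exact ⟨0, fun _ => a, fun _ => ha, hxa, hγ, Fin.elim0⟩
    | tail _ h ih =>
      obtain ⟨m, p, hp, hx, hlast, hchain⟩ := ih
      obtain ⟨a, ha, hza, hγ⟩ := hJ.relJ_iff.1 h
      refine ⟨m + 1, Fin.snoc p a, Fin.lastCases (by simpa using ha) (by simpa using hp),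
        by rwa [← Fin.castSucc_zero, Fin.snoc_castSucc], by simpa using hγ,
        Fin.lastCases (by simpa [hlast] using hza) fun i => ?_⟩
      rw [Fin.succ_castSucc, Fin.snoc_castSucc, Fin.snoc_castSucc]
      exact hchain i

end IsIdeal

theorem stmt18_general (S : PrePFS) (hS : IsPFS S) (J : ∀ k, Set (S.F k))
    (hJ : IsIdeal S J) (k : ℕ) (x y : S.F k) :
    simJ S J k x y ↔ (x = y ∨ pathJ S J k x y ∨ pathJ S J k y x) := by
  rw [simJ, eqvClosure_iff_reflTransGen_or (hJ.relJ_rightUnique hS) (hJ.relJ_leftUnique hS),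
    reflTransGen_iff_eq_or_transGen, reflTransGen_iff_eq_or_transGen, hJ.pathJ_iff_transGen,
    hJ.pathJ_iff_transGen]
  rw [eq_comm (a := y)]
  tauto

/-- for `x, y ∉ 𝒥`, `[x] = [y]` under `∼_𝒥` iff `x = y` or
there is an upper `𝒥`-path from `x` to `y` or from `y` to `x`. -/
theorem stmt18 (S : PrePFS) (hS : IsPFS S) (J : ∀ k, Set (S.F k))
    (hJ : IsIdeal S J) (k : ℕ) (x y : S.F k) (hx : x ∉ J k) (hy : y ∉ J k) :
    simJ S J k x y ↔ (x = y ∨ pathJ S J k x y ∨ pathJ S J k y x) :=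
  stmt18_general S hS J hJ k x y
end
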